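/- (Carleson packing condition for stopping families.) Let ω be a Radon measure on ℝ and let 𝒮 be a collection of dyadic intervals. For S ∈ 𝒮 let ch_𝒮(S) denote the set of maximal elements of {S' ∈ 𝒮 : S' ⊊ S}. Assume that for every S ∈ 𝒮: Σ_{S'∈ch_𝒮(S)} ω(S') ≤ (1/2)·ω(S). Then for every Q ∈ 𝒟: Σ_{S∈𝒮, S⊆Q} ω(S) ≤ 2·ω(Q). -/

import Mathlib

open MeasureTheory Set Filter
open scoped Classical

noncomputable section

/-- The dyadic interval `[2^k m, 2^k (m+1))`. -/
def dy (k m : ℤ) : Set ℝ := Set.Ico ((2:ℝ)^k * m) ((2:ℝ)^k * (m+1))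

/-- The left half of the dyadic interval. -/
def dyL (k m : ℤ) : Set ℝ := dy (k-1) (2*m)

/-- The right half of the dyadic interval. -/
def dyR (k m : ℤ) : Set ℝ := dy (k-1) (2*m+1)

/-- `I^{(r)}`: the dyadic interval of length `2^r |I|` containing `I = dy k m`. -/
def dyUp (r : ℕ) (k m : ℤ) : Set ℝ := dy (k + r) (Int.fdiv m (2^r))

/-- The pairing `⟨f, g⟩_μ = ∫ f g dμ`. -/
def ip (μ : Measure ℝ) (f g : ℝ → ℝ) : ℝ := ∫ x, f x * g x ∂μ

/-- The `L²(μ)` norm. -/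
def nrm (μ : Measure ℝ) (f : ℝ → ℝ) : ℝ := Real.sqrt (∫ x, f x ^ 2 ∂μ)

/-- The average `⟨f⟩_s^μ = μ(s)⁻¹ ∫_s f dμ`. -/
def avg (μ : Measure ℝ) (s : Set ℝ) (f : ℝ → ℝ) : ℝ := (μ s).toReal⁻¹ * ∫ x in s, f x ∂μ

/-- The weight-adapted Haar function `h_I^σ` for `I = dy k m`. -/
def haarW (σ : Measure ℝ) (k m : ℤ) : ℝ → ℝ :=
  if σ (dyL k m) ≠ 0 ∧ σ (dyR k m) ≠ 0 then
    fun x =>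
      Real.sqrt ((σ (dyL k m)).toReal / ((σ (dy k m)).toReal * (σ (dyR k m)).toReal))
          * (dyR k m).indicator 1 x
        - Real.sqrt ((σ (dyR k m)).toReal / ((σ (dy k m)).toReal * (σ (dyL k m)).toReal))
          * (dyL k m).indicator 1 x
  else 0

/-- The martingale difference `Δ_I^σ f = ⟨f, h_I^σ⟩_σ · h_I^σ`. -/
def mdiff (σ : Measure ℝ) (k m : ℤ) (f : ℝ → ℝ) : ℝ → ℝ :=
  fun x => ip σ f (haarW σ k m) * haarW σ k m x

/-- `𝒮`: the linear span of the indicators of dyadic intervals. -/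
def simpleSpan : Submodule ℝ (ℝ → ℝ) :=
  Submodule.span ℝ {f : ℝ → ℝ | ∃ k m : ℤ, f = (dy k m).indicator 1}

/-- A formal operator pair `(T, T*)`: linear maps with `T` sending `𝒮_σ` into `L²(ω)`,
`T*` sending `𝒮_ω` into `L²(σ)`, satisfying the duality relation
`⟨T(σf), g⟩_ω = ⟨f, T*(ωg)⟩_σ` on the spans of indicators.  We write `P.T f` for `T(σf)`
and `P.Ts g` for `T*(ωg)`. -/
structure FormalPair (σ ω : Measure ℝ) where
  T : (ℝ → ℝ) →ₗ[ℝ] (ℝ → ℝ)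
  Ts : (ℝ → ℝ) →ₗ[ℝ] (ℝ → ℝ)
  memT : ∀ f ∈ simpleSpan, MemLp (T f) 2 ω
  memTs : ∀ g ∈ simpleSpan, MemLp (Ts g) 2 σ
  adj : ∀ f ∈ simpleSpan, ∀ g ∈ simpleSpan, ∫ x, T f x * g x ∂ω = ∫ x, f x * Ts g x ∂σ

/-- `(T, T*)` is essentially well localized with parameter `r`. -/
def EWL {σ ω : Measure ℝ} (P : FormalPair σ ω) (r : ℕ) : Prop :=
  ∀ k m : ℤ,
    (∀ᵐ x ∂ω, x ∉ dyUp r k m → P.T (haarW σ k m) x = 0) ∧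
    (∀ᵐ x ∂σ, x ∉ dyUp r k m → P.Ts (haarW ω k m) x = 0)

/-!
Sort the stopping intervals inside `Q` into generations according to the number of stopping
intervals lying strictly between them and `Q`. The intervals of generation `0` are pairwise
disjoint subsets of `Q`, so their total measure is at most `ω(Q)`. Every interval of generation
`n + 1` is a stopping child of an interval of generation `n`, so the hypothesis makes the total
measure of generation `n` at most `2⁻ⁿ ω(Q)`, and summing the geometric series gives `2 ω(Q)`.
-/

open scoped ENNReal

variable {ι α : Type*}

structure IsLaminarFamily (I : ι → Set α) : Prop where
  injective : Function.Injective I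
  nonempty : ∀ i, (I i).Nonempty
  subset_or_subset_or_disjoint : ∀ i j, I i ⊆ I j ∨ I j ⊆ I i ∨ Disjoint (I i) (I j)
  finite_between : ∀ i j, {p | I i ⊂ I p ∧ I p ⊆ I j}.Finite

namespace Stopping

variable (I : ι → Set α) (S : Set ι)

-- `q ∈ ch_S(p)` in the paper's notation.
def IsChild (p q : ι) : Prop :=
  q ∈ S ∧ I q ⊂ I p ∧ ∀ q' ∈ S, I q' ⊂ I p → I q ⊆ I q' → I q = I q'

def ancestors (t q : ι) : Set ι := {p | p ∈ S ∧ I q ⊂ I p ∧ I p ⊆ I t}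

def depth (t q : ι) : ℕ := (ancestors I S t q).ncard

def generation (t : ι) (n : ℕ) : Set ι := {q | q ∈ S ∧ I q ⊆ I t ∧ depth I S t q = n}

end Stopping

namespace IsLaminarFamily

open Stopping

variable {I : ι → Set α} {S : Set ι} {t p q : ι}

theorem subset_or_subset_of_subset (hI : IsLaminarFamily I) {i j j' : ι} (hj : I i ⊆ I j)
    (hj' : I i ⊆ I j') : I j ⊆ I j' ∨ I j' ⊆ I j := by
  obtain ⟨x, hx⟩ := hI.nonempty i
  rcases hI.subset_or_subset_or_disjoint j j' with h | h | h
  · exact .inl h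
  · exact .inr h
  · exact (h.ne_of_mem (hj hx) (hj' hx) rfl).elim

theorem ancestors_finite (hI : IsLaminarFamily I) (S : Set ι) (t q : ι) :
    (ancestors I S t q).Finite :=
  (hI.finite_between q t).subset fun _ hp => hp.2

theorem ancestors_eq_insert_of_isChild (hI : IsLaminarFamily I) (hp : p ∈ S) (hpt : I p ⊆ I t)
    (h : IsChild I S p q) : ancestors I S t q = insert p (ancestors I S t p) := by
  obtain ⟨-, hqp, hmax⟩ := h
  ext a
  constructor
  · rintro ⟨haS, hqa, hat⟩
    by_cases hap : a = p
    · exact .inl hap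
    have hne : I p ≠ I a := fun h => hap (hI.injective h).symm
    refine .inr ⟨haS, ?_, hat⟩
    rcases hI.subset_or_subset_of_subset hqp.subset hqa.subset with hpa | hap'
    · exact hpa.ssubset_of_ne hne
    · exact absurd (hmax a haS (hap'.ssubset_of_ne hne.symm) hqa.subset) hqa.ne
  · rintro (rfl | ⟨haS, hpa, hat⟩)
    · exact ⟨hp, hqp, hpt⟩
    · exact ⟨haS, hqp.trans hpa, hat⟩

theorem depth_eq_succ_of_isChild (hI : IsLaminarFamily I) (hp : p ∈ S) (hpt : I p ⊆ I t)
    (h : IsChild I S p q) : depth I S t q = depth I S t p + 1 := by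
  rw [depth, hI.ancestors_eq_insert_of_isChild hp hpt h,
    Set.ncard_insert_of_notMem (fun hp => hp.2.1.ne rfl) (hI.ancestors_finite S t p), depth]

/-- The parent of `q` is its smallest ancestor. -/
theorem exists_isChild_of_depth_ne_zero (hI : IsLaminarFamily I) (hq : q ∈ S)
    (h : depth I S t q ≠ 0) : ∃ p ∈ S, I p ⊆ I t ∧ IsChild I S p q := by
  obtain ⟨p, ⟨hpS, hqp, hpt⟩, hmin⟩ := Set.Finite.exists_minimalFor I _
    (hI.ancestors_finite S t q) (Set.nonempty_of_ncard_ne_zero h)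
  refine ⟨p, hpS, hpt, hq, hqp, fun a haS hap hqa => ?_⟩
  by_contra hqa'
  exact hap.2 (hmin ⟨haS, hqa.ssubset_of_ne hqa', hap.subset.trans hpt⟩ hap.subset)

theorem exists_isChild_of_mem_generation_succ (hI : IsLaminarFamily I) {n : ℕ}
    (hq : q ∈ generation I S t (n + 1)) : ∃ p ∈ generation I S t n, IsChild I S p q := by
  obtain ⟨hqS, -, hdq⟩ := hq
  obtain ⟨p, hpS, hpt, hpq⟩ := hI.exists_isChild_of_depth_ne_zero hqS (t := t) (by omega)
  refine ⟨p, ⟨hpS, hpt, ?_⟩, hpq⟩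
  have := hI.depth_eq_succ_of_isChild hpS hpt hpq
  omega

theorem not_ssubset_of_mem_generation_zero (hI : IsLaminarFamily I)
    (hq : q ∈ generation I S t 0) (hp : p ∈ S) (hpt : I p ⊆ I t) : ¬I q ⊂ I p := fun hqp =>
  ((Set.ncard_pos (hI.ancestors_finite S t q)).2 ⟨p, hp, hqp, hpt⟩).ne' hq.2.2

theorem pairwiseDisjoint_generation_zero (hI : IsLaminarFamily I) (S : Set ι) (t : ι) :
    (generation I S t 0).PairwiseDisjoint I := by
  intro a ha b hb hab
  have hne : I a ≠ I b := hI.injective.ne hab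
  rcases hI.subset_or_subset_or_disjoint a b with h | h | h
  · exact (hI.not_ssubset_of_mem_generation_zero ha hb.1 hb.2.1 (h.ssubset_of_ne hne)).elim
  · exact (hI.not_ssubset_of_mem_generation_zero hb ha.1 ha.2.1 (h.ssubset_of_ne hne.symm)).elim
  · exact h

variable [MeasurableSpace α] {μ : Measure α} {c : ℝ≥0∞}

theorem tsum_measure_generation_succ_le (hI : IsLaminarFamily I)
    (hch : ∀ p ∈ S, ∑' q : {q // IsChild I S p q}, μ (I q) ≤ c * μ (I p)) (t : ι) (n : ℕ) :
    ∑' q : generation I S t (n + 1), μ (I q) ≤ c * ∑' p : generation I S t n, μ (I p) :=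
  calc ∑' q : generation I S t (n + 1), μ (I q)
      ≤ ∑' q : ⋃ p : generation I S t n, {q | IsChild I S p q}, μ (I q) :=
        ENNReal.tsum_mono_subtype (fun q => μ (I q)) fun q hq => by
          obtain ⟨p, hp, hpq⟩ := hI.exists_isChild_of_mem_generation_succ hq
          exact Set.mem_iUnion.2 ⟨⟨p, hp⟩, hpq⟩
    _ ≤ ∑' p : generation I S t n, ∑' q : {q | IsChild I S p q}, μ (I q) :=
        ENNReal.tsum_iUnion_le_tsum (fun q => μ (I q)) _
    _ ≤ ∑' p : generation I S t n, c * μ (I p) := ENNReal.tsum_le_tsum fun p => hch p p.2.1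
    _ = c * ∑' p : generation I S t n, μ (I p) := ENNReal.tsum_mul_left

variable [Countable ι]

theorem tsum_measure_generation_zero_le (hI : IsLaminarFamily I)
    (hmeas : ∀ i, MeasurableSet (I i)) (S : Set ι) (t : ι) :
    ∑' q : generation I S t 0, μ (I q) ≤ μ (I t) := by
  rw [← measure_biUnion (Set.to_countable _) (hI.pairwiseDisjoint_generation_zero S t)
    fun i _ => hmeas i]
  exact measure_mono (Set.iUnion₂_subset fun q hq => hq.2.1)

theorem tsum_measure_generation_le (hI : IsLaminarFamily I) (hmeas : ∀ i, MeasurableSet (I i))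
    (hch : ∀ p ∈ S, ∑' q : {q // IsChild I S p q}, μ (I q) ≤ c * μ (I p)) (t : ι) (n : ℕ) :
    ∑' q : generation I S t n, μ (I q) ≤ c ^ n * μ (I t) := by
  induction n with
  | zero => simpa using hI.tsum_measure_generation_zero_le hmeas S t
  | succ n ih =>
    calc _ ≤ c * ∑' p : generation I S t n, μ (I p) := hI.tsum_measure_generation_succ_le hch t n
      _ ≤ c * (c ^ n * μ (I t)) := by gcongr
      _ = c ^ (n + 1) * μ (I t) := by ring

theorem tsum_measure_le_inv_one_sub_mul (hI : IsLaminarFamily I)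
    (hmeas : ∀ i, MeasurableSet (I i))
    (hch : ∀ p ∈ S, ∑' q : {q // IsChild I S p q}, μ (I q) ≤ c * μ (I p)) (t : ι) :
    ∑' q : {q // q ∈ S ∧ I q ⊆ I t}, μ (I q) ≤ (1 - c)⁻¹ * μ (I t) :=
  calc ∑' q : {q // q ∈ S ∧ I q ⊆ I t}, μ (I q)
      ≤ ∑' q : ⋃ n, generation I S t n, μ (I q) :=
        ENNReal.tsum_mono_subtype (fun q => μ (I q)) (s := {q | q ∈ S ∧ I q ⊆ I t})
          fun q hq => Set.mem_iUnion.2 ⟨_, hq.1, hq.2, rfl⟩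
    _ ≤ ∑' n, ∑' q : generation I S t n, μ (I q) :=
        ENNReal.tsum_iUnion_le_tsum (fun q => μ (I q)) _
    _ ≤ ∑' n, c ^ n * μ (I t) := ENNReal.tsum_le_tsum (hI.tsum_measure_generation_le hmeas hch t)
    _ = (1 - c)⁻¹ * μ (I t) := by rw [ENNReal.tsum_mul_right, ENNReal.tsum_geometric]

end IsLaminarFamily

theorem dy_left_lt_right (k m : ℤ) : (2 : ℝ) ^ k * m < 2 ^ k * (m + 1) := by
  rw [mul_add_one]
  exact lt_add_of_pos_right _ (zpow_pos two_pos k)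

theorem dy_nonempty (k m : ℤ) : (dy k m).Nonempty := Set.nonempty_Ico.2 (dy_left_lt_right k m)

theorem mem_dy_iff {x : ℝ} {k m : ℤ} : x ∈ dy k m ↔ ⌊x / 2 ^ k⌋ = m := by
  have hk : (0 : ℝ) < 2 ^ k := zpow_pos two_pos k
  rw [Int.floor_eq_iff, le_div_iff₀ hk, div_lt_iff₀ hk, mul_comm (m : ℝ), mul_comm ((m : ℝ) + 1)]
  rfl

theorem floor_div_two_zpow_add (x : ℝ) (k : ℤ) (n : ℕ) :
    ⌊x / 2 ^ (k + n)⌋ = ⌊x / 2 ^ k⌋ / 2 ^ n := by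
  have h2n : (2 : ℝ) ^ n = ((2 ^ n : ℕ) : ℝ) := by push_cast; rfl
  rw [zpow_add₀ two_ne_zero, zpow_natCast, ← div_div, h2n, Int.floor_div_natCast]
  push_cast
  rfl

theorem eq_of_mem_dy_of_mem_dy {x : ℝ} {k m m' : ℤ} (hx : x ∈ dy k m) (hx' : x ∈ dy k m') :
    m = m' :=
  (mem_dy_iff.1 hx).symm.trans (mem_dy_iff.1 hx')

theorem dy_subset_of_le_of_mem {x : ℝ} {k k' m m' : ℤ} (hk : k ≤ k') (hx : x ∈ dy k m)
    (hx' : x ∈ dy k' m') : dy k m ⊆ dy k' m' := by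
  obtain ⟨n, rfl⟩ := Int.le.dest hk
  intro y hy
  rw [mem_dy_iff] at hx hx' hy ⊢
  rw [floor_div_two_zpow_add, hy, ← hx, ← floor_div_two_zpow_add, hx']

theorem le_of_dy_subset {k k' m m' : ℤ} (h : dy k m ⊆ dy k' m') : k ≤ k' := by
  obtain ⟨h₁, h₂⟩ := (Set.Ico_subset_Ico_iff (dy_left_lt_right k m)).1 h
  rw [mul_add_one, mul_add_one] at h₂
  exact (zpow_le_zpow_iff_right₀ (one_lt_two : (1 : ℝ) < 2)).1 (by linarith)

theorem dy_injective : Function.Injective fun p : ℤ × ℤ => dy p.1 p.2 := by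
  rintro ⟨k, m⟩ ⟨k', m'⟩ (h : dy k m = dy k' m')
  obtain rfl : k = k' := (le_of_dy_subset h.le).antisymm (le_of_dy_subset h.ge)
  obtain ⟨x, hx⟩ := dy_nonempty k m
  rw [eq_of_mem_dy_of_mem_dy hx (h ▸ hx : x ∈ dy k m')]

theorem lt_of_dy_ssubset {k k' m m' : ℤ} (h : dy k m ⊂ dy k' m') : k < k' := by
  refine (le_of_dy_subset h.1).lt_of_ne ?_
  rintro rfl
  obtain ⟨x, hx⟩ := dy_nonempty k m
  exact h.ne (by rw [eq_of_mem_dy_of_mem_dy hx (h.1 hx)])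

theorem dy_isLaminarFamily : IsLaminarFamily fun p : ℤ × ℤ => dy p.1 p.2 where
  injective := dy_injective
  nonempty p := dy_nonempty p.1 p.2
  subset_or_subset_or_disjoint p q := by
    by_cases h : Disjoint (dy p.1 p.2) (dy q.1 q.2)
    · exact .inr (.inr h)
    obtain ⟨x, hxp, hxq⟩ := Set.not_disjoint_iff.1 h
    rcases le_total p.1 q.1 with hk | hk
    · exact .inl (dy_subset_of_le_of_mem hk hxp hxq)
    · exact .inr (.inl (dy_subset_of_le_of_mem hk hxq hxp))
  finite_between q t := by
    refine Set.Finite.of_finite_image (f := Prod.fst) ((Set.finite_Ioc q.1 t.1).subset ?_) ?_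
    · rintro _ ⟨p, ⟨hqp, hpt⟩, rfl⟩
      exact ⟨lt_of_dy_ssubset hqp, le_of_dy_subset hpt⟩
    · rintro p ⟨hqp, -⟩ p' ⟨hqp', -⟩ hk
      obtain ⟨x, hx⟩ := dy_nonempty q.1 q.2
      have hx' := hqp'.1 hx
      rw [← hk] at hx'
      exact Prod.ext hk (eq_of_mem_dy_of_mem_dy (hqp.1 hx) hx')

theorem carleson_packing_general (ω : Measure ℝ) (S : Set (ℤ × ℤ))
    (hch : ∀ p ∈ S,
      ∑' q : {q : ℤ × ℤ // q ∈ S ∧ dy q.1 q.2 ⊂ dy p.1 p.2 ∧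
          ∀ q' ∈ S, dy q'.1 q'.2 ⊂ dy p.1 p.2 → dy q.1 q.2 ⊆ dy q'.1 q'.2 →
            dy q.1 q.2 = dy q'.1 q'.2},
        ω (dy (q : ℤ × ℤ).1 (q : ℤ × ℤ).2) ≤ ω (dy p.1 p.2) / 2) :
    ∀ k m : ℤ,
      ∑' q : {q : ℤ × ℤ // q ∈ S ∧ dy q.1 q.2 ⊆ dy k m},
        ω (dy (q : ℤ × ℤ).1 (q : ℤ × ℤ).2) ≤ 2 * ω (dy k m) := by
  intro k m
  have hhalf : ∀ p ∈ S, ∑' q : {q // Stopping.IsChild (fun p : ℤ × ℤ => dy p.1 p.2) S p q},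
      ω (dy q.1.1 q.1.2) ≤ 2⁻¹ * ω (dy p.1 p.2) := fun p hp =>
    (hch p hp).trans_eq ENNReal.div_eq_inv_mul
  have := dy_isLaminarFamily.tsum_measure_le_inv_one_sub_mul (fun _ => measurableSet_Ico) hhalf
    (k, m)
  rwa [ENNReal.one_sub_inv_two, inv_inv] at this

/-- Carleson packing condition for stopping families: if each stopping interval's
maximal proper stopping descendants carry at most half its measure, then the family
satisfies the Carleson packing condition with constant `2`. -/
theorem carleson_packing (ω : Measure ℝ) [IsLocallyFiniteMeasure ω] (S : Set (ℤ × ℤ))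
    (hch : ∀ p ∈ S,
      ∑' q : {q : ℤ × ℤ // q ∈ S ∧ dy q.1 q.2 ⊂ dy p.1 p.2 ∧
          ∀ q' ∈ S, dy q'.1 q'.2 ⊂ dy p.1 p.2 → dy q.1 q.2 ⊆ dy q'.1 q'.2 →
            dy q.1 q.2 = dy q'.1 q'.2},
        ω (dy (q : ℤ × ℤ).1 (q : ℤ × ℤ).2) ≤ ω (dy p.1 p.2) / 2) :
    ∀ k m : ℤ,
      ∑' q : {q : ℤ × ℤ // q ∈ S ∧ dy q.1 q.2 ⊆ dy k m},
        ω (dy (q : ℤ × ℤ).1 (q : ℤ × ℤ).2) ≤ 2 * ω (dy k m) :=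
  carleson_packing_general ω S hch

end
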